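/- Let (T0, T̃0) be a pair of densely defined linear operators with common dense domain D on a complex Hilbert space H satisfying conditions (T1) and (T2). Then the kernel of the boundary form is W0, i.e. for u ∈ W: u ∈ W0 if and only if [u|v] = 0 for all v ∈ W; equivalently W^[⊥] = W0 and W0^[⊥] = W. -/

import Mathlib

open scoped InnerProductSpace
open Filter Topology LinearPMap

noncomputable section

variable {H : Type*} [NormedAddCommGroup H] [InnerProductSpace ℂ H] [CompleteSpace H]

/-- The inner product used in the paper (antilinear in the **second** entry):
`pInner x y = ⟪y, x⟫` in Mathlib's convention. -/
def pInner {H : Type*} [NormedAddCommGroup H] [InnerProductSpace ℂ H] (x y : H) : ℂ :=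
  ⟪y, x⟫_ℂ

/-- A pair of densely defined operators with common domain satisfying conditions (T1) and (T2). -/
structure IsDualPairT12 (T0 T0t : H →ₗ.[ℂ] H) (lam : ℝ) : Prop where
  dom_eq : T0.domain = T0t.domain
  dense' : Dense (T0.domain : Set H)
  sym : ∀ (φ : T0.domain) (ψ : T0t.domain), pInner (T0 φ) (ψ : H) = pInner (φ : H) (T0t ψ)
  lam_pos : 0 < lam
  bound : ∀ (x : H) (hx : x ∈ T0.domain),
    ‖T0 ⟨x, hx⟩ + T0t ⟨x, dom_eq.le hx⟩‖ ≤ 2 * lam * ‖x‖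

/-- A joint pair of abstract Friedrichs operators: (T1), (T2) and (T3). -/
structure IsFriedrichsPair (T0 T0t : H →ₗ.[ℂ] H) (lam mu : ℝ)
    extends IsDualPairT12 T0 T0t lam : Prop where
  mu_pos : 0 < mu
  coercive : ∀ (x : H) (hx : x ∈ T0.domain),
    2 * mu * ‖x‖ ^ 2 ≤ (pInner (T0 ⟨x, hx⟩ + T0t ⟨x, dom_eq.le hx⟩) x).re

/-- The boundary form `[u|v] := ⟨T₁u , v⟩ − ⟨u , T̃₁v⟩` on the graph space
`W := dom T₁ = dom (T̃₀)*`.  The hypothesis `hW` expresses the fact `dom T₁ = dom T̃₁`. -/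
def bform (T0 T0t : H →ₗ.[ℂ] H) (hW : T0t.adjoint.domain = T0.adjoint.domain)
    (u v : T0t.adjoint.domain) : ℂ :=
  pInner (T0t.adjoint u) (v : H) - pInner (u : H) (T0.adjoint ⟨(v : H), hW.le v.2⟩)

/-- `X^[⊥]`, the `[·|·]`-orthogonal complement of `X ⊆ W` in the graph space. -/
def iorth (T0 T0t : H →ₗ.[ℂ] H) (hW : T0t.adjoint.domain = T0.adjoint.domain)
    (X : Set ↥T0t.adjoint.domain) : Set ↥T0t.adjoint.domain :=
  {u | ∀ v ∈ X, bform T0 T0t hW u v = 0}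

/-- `W⁺ = {u ∈ W : [u|u] ≥ 0}`. -/
def Wplus (T0 T0t : H →ₗ.[ℂ] H) (hW : T0t.adjoint.domain = T0.adjoint.domain) :
    Set ↥T0t.adjoint.domain :=
  {u | 0 ≤ (bform T0 T0t hW u u).re}

/-- `W⁻ = {u ∈ W : [u|u] ≤ 0}`. -/
def Wminus (T0 T0t : H →ₗ.[ℂ] H) (hW : T0t.adjoint.domain = T0.adjoint.domain) :
    Set ↥T0t.adjoint.domain :=
  {u | (bform T0 T0t hW u u).re ≤ 0}

/-- (V)-boundary conditions for a subset `V` of the graph space `W`. -/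
def VBC (T0 T0t : H →ₗ.[ℂ] H) (hW : T0t.adjoint.domain = T0.adjoint.domain)
    (V : Set ↥T0t.adjoint.domain) : Prop :=
  V ⊆ Wplus T0 T0t hW ∧ iorth T0 T0t hW V ⊆ Wminus T0 T0t hW ∧
    V = iorth T0 T0t hW (iorth T0 T0t hW V)

/-- The graph norm `‖u‖_{T₁} = ‖u‖ + ‖T₁ u‖` on the graph space. -/
def gnorm (T0t : H →ₗ.[ℂ] H) (u : T0t.adjoint.domain) : ℝ :=
  ‖(u : H)‖ + ‖T0t.adjoint u‖

/-- The distance associated with the graph norm. -/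
def gdist (T0t : H →ₗ.[ℂ] H) (u v : T0t.adjoint.domain) : ℝ := gnorm T0t (u - v)

/-- Closedness (sequential) in the graph-norm topology of `W`. -/
def GClosed (T0t : H →ₗ.[ℂ] H) (X : Set ↥T0t.adjoint.domain) : Prop :=
  ∀ f : ℕ → ↥T0t.adjoint.domain, (∀ n, f n ∈ X) →
    ∀ l, Tendsto (fun n => gdist T0t (f n) l) atTop (𝓝 0) → l ∈ X

/-- `W₀` (the domain of the closure of `T₀`), viewed as a subset of the graph space `W`. -/
def W0set (T0 T0t : H →ₗ.[ℂ] H) : Set ↥T0t.adjoint.domain :=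
  {u | (u : H) ∈ T0.closure.domain}

/-- The graph inner product on `W` (in the paper's convention). -/
def gip (T0t : H →ₗ.[ℂ] H) (u v : ↥T0t.adjoint.domain) : ℂ :=
  pInner (u : H) (v : H) + pInner (T0t.adjoint u) (T0t.adjoint v)

/-- The (Hilbert) orthogonal complement of `W₀` in the graph space. -/
def W0perp (T0 T0t : H →ₗ.[ℂ] H) : Set ↥T0t.adjoint.domain :=
  {u | ∀ v : ↥T0t.adjoint.domain, (v : H) ∈ T0.closure.domain → gip T0t u v = 0}

/-- `ker T₁` as a subset of the graph space. -/
def kerT1set (T0t : H →ₗ.[ℂ] H) : Set ↥T0t.adjoint.domain := {u | T0t.adjoint u = 0}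

/-- `ker T̃₁` as a subset of the graph space. -/
def kerT1tset (T0 T0t : H →ₗ.[ℂ] H) (hW : T0t.adjoint.domain = T0.adjoint.domain) :
    Set ↥T0t.adjoint.domain :=
  {u | T0.adjoint ⟨(u : H), hW.le u.2⟩ = 0}

/-- An operator `M ∈ L(W;W')`, encoded through the pairing `m u v = ⟨Mu, v⟩_{W',W}`
(linear in `u`, antilinear in `v`, and bounded with respect to the graph norm). -/
structure MOp (T0t : H →ₗ.[ℂ] H) where
  m : ↥T0t.adjoint.domain → ↥T0t.adjoint.domain → ℂ
  add_left : ∀ u v w, m (u + v) w = m u w + m v w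
  smul_left : ∀ (c : ℂ) (u w), m (c • u) w = c * m u w
  add_right : ∀ u v w, m u (v + w) = m u v + m u w
  smul_right : ∀ (c : ℂ) (u w), m u (c • w) = starRingEnd ℂ c * m u w
  bounded : ∃ C, ∀ u v, ‖m u v‖ ≤ C * (gnorm T0t u * gnorm T0t v)

/-- The (M)-boundary conditions for a pairing `m u v = ⟨Mu, v⟩_{W',W}`:
(M1) non-negativity and (M2) `W = ker (D − M) + ker (D + M)`. -/
def MBC (T0 T0t : H →ₗ.[ℂ] H) (hW : T0t.adjoint.domain = T0.adjoint.domain)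
    (m : ↥T0t.adjoint.domain → ↥T0t.adjoint.domain → ℂ) : Prop :=
  (∀ u, 0 ≤ (m u u).re) ∧
  (∀ w : ↥T0t.adjoint.domain, ∃ a b : ↥T0t.adjoint.domain,
    (∀ v, bform T0 T0t hW a v = m a v) ∧ (∀ v, bform T0 T0t hW b v + m b v = 0) ∧ w = a + b)

/-- `ker (D − M)` for a pairing `m`. -/
def kerDsubM (T0 T0t : H →ₗ.[ℂ] H) (hW : T0t.adjoint.domain = T0.adjoint.domain)
    (m : ↥T0t.adjoint.domain → ↥T0t.adjoint.domain → ℂ) : Set ↥T0t.adjoint.domain :=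
  {u | ∀ v, bform T0 T0t hW u v = m u v}

/-- `ker (D + M)` for a pairing `m`. -/
def kerDaddM (T0 T0t : H →ₗ.[ℂ] H) (hW : T0t.adjoint.domain = T0.adjoint.domain)
    (m : ↥T0t.adjoint.domain → ↥T0t.adjoint.domain → ℂ) : Set ↥T0t.adjoint.domain :=
  {u | ∀ v, bform T0 T0t hW u v + m u v = 0}

/-!
(T1) gives `T₀ ⊆ T̃₀* = T₁` and `T̃₀ ⊆ T₀* = T̃₁`, so both operators are closable and
`T̄₀ = T₀**` is a restriction of `T₁`. Since `T₀**` and `T₀* = T̃₁` are formal adjoints of each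
other, `[u|v] = 0` for `u ∈ W₀`; conversely `[u|·] = 0` on `W = dom T₀*` says precisely that
`u ∈ dom T₀** = W₀`. For `v ∈ W₀` in the second slot one swaps the roles of `T₀` and `T̃₀`,
which needs `W₀ ⊆ dom T̃₀**`: by (T2), `T₀ + T̃₀` is bounded on `D`, so along a sequence
approximating `v` in the graph norm of `T₀` the values of `T̃₀` converge as well.
-/

namespace Submodule

variable {𝕜 E F : Type*} [RCLike 𝕜] [NormedAddCommGroup E] [InnerProductSpace 𝕜 E]
  [NormedAddCommGroup F] [InnerProductSpace 𝕜 F] [CompleteSpace E] [CompleteSpace F]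

theorem adjoint_adjoint_le_topologicalClosure (g : Submodule 𝕜 (E × F)) :
    g.adjoint.adjoint ≤ g.topologicalClosure := by
  intro x hx
  let e := WithLp.prodContinuousLinearEquiv 2 𝕜 E F
  let K : Submodule 𝕜 (WithLp 2 (E × F)) := g.comap (e : WithLp 2 (E × F) →ₗ[𝕜] E × F)
  -- `g.adjoint` is `Kᗮ` rotated by `(a, b) ↦ (b, -a)`, and `Kᗮᗮ` is the closure of `K`.
  have hxK : WithLp.toLp 2 x ∈ Kᗮᗮ := by
    rw [mem_orthogonal]
    intro w hw
    have hw_adj : ((w.ofLp.2, -w.ofLp.1) : F × E) ∈ g.adjoint := by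
      rw [mem_adjoint_iff]
      intro a b hab
      have h := (mem_orthogonal K w).1 hw (WithLp.toLp 2 (a, b)) hab
      rw [WithLp.prod_inner_apply] at h
      simp only [inner_neg_right, sub_neg_eq_add]
      linear_combination h
    have h := (mem_adjoint_iff _ _).1 hx _ _ hw_adj
    rw [WithLp.prod_inner_apply]
    simp only [inner_neg_left] at h
    linear_combination -h
  rw [orthogonal_orthogonal_eq_closure] at hxK
  exact e.continuous.closure_preimage_subset (g : Set (E × F)) hxK

end Submodule

namespace LinearPMap

section Topological

variable {R E F : Type*} [CommRing R] [AddCommGroup E] [AddCommGroup F] [Module R E] [Module R F]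
  [TopologicalSpace E] [TopologicalSpace F] [ContinuousAdd E] [ContinuousAdd F]
  [TopologicalSpace R] [ContinuousSMul R E] [ContinuousSMul R F]

theorem IsClosed.closure_le {f g : E →ₗ.[R] F} (hg : g.IsClosed) (h : f ≤ g) : f.closure ≤ g := by
  refine le_of_le_graph ?_
  rw [← (hg.isClosable.leIsClosable h).graph_closure_eq_closure_graph]
  exact Submodule.topologicalClosure_minimal _ (le_graph_of_le h) hg

theorem IsClosable.mem_closure_domain_of_tendsto {f : E →ₗ.[R] F} (hf : f.IsClosable)
    {x : ℕ → f.domain} {v : E} {y : F} (hx : Tendsto (fun n => (x n : E)) atTop (𝓝 v))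
    (hy : Tendsto (fun n => f (x n)) atTop (𝓝 y)) : v ∈ f.closure.domain := by
  refine mem_domain_iff.2 ⟨y, ?_⟩
  rw [← hf.graph_closure_eq_closure_graph]
  exact mem_closure_of_tendsto (hx.prodMk_nhds hy) (Eventually.of_forall fun n => f.mem_graph (x n))

theorem IsClosable.exists_seq_tendsto_of_mem_closure_domain [FirstCountableTopology E]
    [FirstCountableTopology F] {f : E →ₗ.[R] F} (hf : f.IsClosable) {v : E}
    (hv : v ∈ f.closure.domain) :
    ∃ x : ℕ → f.domain, Tendsto (fun n => (x n : E)) atTop (𝓝 v) ∧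
      Tendsto (fun n => f (x n)) atTop (𝓝 (f.closure ⟨v, hv⟩)) := by
  have hmem : (v, f.closure ⟨v, hv⟩) ∈ _root_.closure (f.graph : Set (E × F)) := by
    rw [← Submodule.topologicalClosure_coe, hf.graph_closure_eq_closure_graph]
    exact f.closure.mem_graph ⟨v, hv⟩
  obtain ⟨p, hp, hlim⟩ := mem_closure_iff_seq_limit.1 hmem
  choose x hx using fun n => f.mem_graph_iff'.1 (hp n)
  obtain rfl : p = fun n => ((x n : E), f (x n)) := funext fun n => (hx n).symm
  exact ⟨x, (continuous_fst.tendsto _).comp hlim, (continuous_snd.tendsto _).comp hlim⟩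

end Topological

section Normed

variable {𝕜 E F : Type*} [NontriviallyNormedField 𝕜] [NormedAddCommGroup E] [NormedSpace 𝕜 E]
  [NormedAddCommGroup F] [NormedSpace 𝕜 F] [CompleteSpace F]

theorem IsClosable.closure_domain_le_of_norm_add_le {S T : E →ₗ.[𝕜] F} (hS : S.IsClosable)
    (hT : T.IsClosable) (hdom : S.domain ≤ T.domain) (C : ℝ)
    (hC : ∀ x (hx : x ∈ S.domain), ‖S ⟨x, hx⟩ + T ⟨x, hdom hx⟩‖ ≤ C * ‖x‖) :
    S.closure.domain ≤ T.closure.domain := by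
  intro v hv
  obtain ⟨x, hxv, hSx⟩ := hS.exists_seq_tendsto_of_mem_closure_domain hv
  let B : S.domain →ₗ[𝕜] F := S.toFun + T.toFun.comp (Submodule.inclusion hdom)
  have hB : UniformContinuous B :=
    (AddMonoidHomClass.lipschitz_of_bound B C fun y : S.domain => hC y y.2).uniformContinuous
  have hx : CauchySeq x := by
    rw [CauchySeq, ← (isUniformInducing_val _).cauchy_map_iff, map_map]
    exact hxv.cauchySeq
  obtain ⟨b, hb⟩ := cauchySeq_tendsto_of_complete (hB.comp_cauchySeq hx)
  refine hT.mem_closure_domain_of_tendsto (x := fun n => Submodule.inclusion hdom (x n)) hxv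
    (y := b - S.closure ⟨v, hv⟩) ?_
  convert hb.sub hSx using 2 with n
  exact (add_sub_cancel_left _ _).symm

end Normed

section Inner

variable {𝕜 E F : Type*} [RCLike 𝕜] [NormedAddCommGroup E] [InnerProductSpace 𝕜 E]
  [NormedAddCommGroup F] [InnerProductSpace 𝕜 F] [CompleteSpace E] [CompleteSpace F]

theorem closure_eq_adjoint_adjoint {T : E →ₗ.[𝕜] F} (hT : Dense (T.domain : Set E))
    (hT' : Dense (T†.domain : Set F)) : T.closure = T†† := by
  have hle : T ≤ T†† := (adjoint_isFormalAdjoint hT).le_adjoint hT'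
  refine le_antisymm ((adjoint_isClosed hT').closure_le hle) (le_of_le_graph ?_)
  rw [adjoint_graph_eq_graph_adjoint hT', adjoint_graph_eq_graph_adjoint hT,
    ← ((adjoint_isClosed hT').isClosable.leIsClosable hle).graph_closure_eq_closure_graph]
  exact T.graph.adjoint_adjoint_le_topologicalClosure

theorem adjoint_isFormalAdjoint_closure {T : E →ₗ.[𝕜] F} (hT : Dense (T.domain : Set E))
    (hT' : Dense (T†.domain : Set F)) : T†.IsFormalAdjoint T.closure := by
  rw [closure_eq_adjoint_adjoint hT hT']
  exact (adjoint_isFormalAdjoint hT').symm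

end Inner

end LinearPMap

namespace IsDualPairT12

variable {T0 T0t : H →ₗ.[ℂ] H} {lam : ℝ}

omit [CompleteSpace H] in
theorem dense_domain_tilde (hP : IsDualPairT12 T0 T0t lam) : Dense (T0t.domain : Set H) :=
  hP.dom_eq ▸ hP.dense'

omit [CompleteSpace H] in
theorem isFormalAdjoint (hP : IsDualPairT12 T0 T0t lam) : T0t.IsFormalAdjoint T0 :=
  fun ψ φ => (hP.sym φ ψ).symm

theorem le_adjoint_tilde (hP : IsDualPairT12 T0 T0t lam) : T0 ≤ T0t† :=
  hP.isFormalAdjoint.le_adjoint hP.dense_domain_tilde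

theorem tilde_le_adjoint (hP : IsDualPairT12 T0 T0t lam) : T0t ≤ T0† :=
  hP.isFormalAdjoint.symm.le_adjoint hP.dense'

theorem closure_le_adjoint_tilde (hP : IsDualPairT12 T0 T0t lam) : T0.closure ≤ T0t† :=
  (adjoint_isClosed hP.dense_domain_tilde).closure_le hP.le_adjoint_tilde

theorem tilde_closure_le_adjoint (hP : IsDualPairT12 T0 T0t lam) : T0t.closure ≤ T0† :=
  (adjoint_isClosed hP.dense').closure_le hP.tilde_le_adjoint

theorem closure_domain_le (hP : IsDualPairT12 T0 T0t lam) :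
    T0.closure.domain ≤ T0t.closure.domain :=
  IsClosable.closure_domain_le_of_norm_add_le
    ((adjoint_isClosed hP.dense_domain_tilde).isClosable.leIsClosable hP.le_adjoint_tilde)
    ((adjoint_isClosed hP.dense').isClosable.leIsClosable hP.tilde_le_adjoint)
    hP.dom_eq.le (2 * lam) hP.bound

theorem dense_adjoint_domain (hP : IsDualPairT12 T0 T0t lam) : Dense (T0†.domain : Set H) :=
  hP.dense_domain_tilde.mono hP.tilde_le_adjoint.1

theorem dense_adjoint_domain_tilde (hP : IsDualPairT12 T0 T0t lam) :
    Dense (T0t†.domain : Set H) :=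
  hP.dense'.mono hP.le_adjoint_tilde.1

variable (hW : T0t.adjoint.domain = T0.adjoint.domain)

theorem bform_eq_zero_of_mem_left (hP : IsDualPairT12 T0 T0t lam) {u : T0t†.domain}
    (hu : (u : H) ∈ T0.closure.domain) (v : T0t†.domain) : bform T0 T0t hW u v = 0 := by
  have hT1 : T0.closure ⟨u, hu⟩ = T0t† u := hP.closure_le_adjoint_tilde.2 rfl
  have h := adjoint_isFormalAdjoint_closure hP.dense' hP.dense_adjoint_domain
    ⟨v, hW.le v.2⟩ ⟨u, hu⟩
  rw [bform, pInner, pInner, h, hT1, sub_self]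

theorem bform_eq_zero_of_mem_right (hP : IsDualPairT12 T0 T0t lam) (u : T0t†.domain)
    {v : T0t†.domain} (hv : (v : H) ∈ T0.closure.domain) : bform T0 T0t hW u v = 0 := by
  have hv' := hP.closure_domain_le hv
  have hT1 : T0t.closure ⟨v, hv'⟩ = T0† ⟨v, hW.le v.2⟩ := hP.tilde_closure_le_adjoint.2 rfl
  have h := adjoint_isFormalAdjoint_closure hP.dense_domain_tilde hP.dense_adjoint_domain_tilde
    u ⟨v, hv'⟩
  rw [hT1] at h
  rw [bform, pInner, pInner, ← inner_conj_symm, h, inner_conj_symm, sub_self]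

theorem mem_closure_domain_of_bform_eq_zero (hP : IsDualPairT12 T0 T0t lam)
    {u : T0t†.domain} (hu : ∀ v, bform T0 T0t hW u v = 0) : (u : H) ∈ T0.closure.domain := by
  rw [closure_eq_adjoint_adjoint hP.dense' hP.dense_adjoint_domain]
  refine mem_adjoint_domain_of_exists _ ⟨T0t† u, fun v => ?_⟩
  have h := sub_eq_zero.1 (hu ⟨v, hW.ge v.2⟩)
  rw [pInner, pInner] at h
  rw [← inner_conj_symm, h, inner_conj_symm]

end IsDualPairT12

/-- Theorem 2.3 (vi), first part: the kernel of the boundary form is `W₀`: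
for `u ∈ W`, `u ∈ W₀ ↔ [u|v] = 0` for all `v ∈ W`; equivalently `W^[⊥] = W₀`
and `W₀^[⊥] = W`. -/
theorem boundary_form_kernel_eq_W0
    (T0 T0t : H →ₗ.[ℂ] H) (lam : ℝ) (hP : IsDualPairT12 T0 T0t lam)
    (hW : T0t.adjoint.domain = T0.adjoint.domain) :
    (∀ u : T0t.adjoint.domain,
      ((u : H) ∈ T0.closure.domain ↔ ∀ v, bform T0 T0t hW u v = 0)) ∧
    iorth T0 T0t hW Set.univ = W0set T0 T0t ∧
    iorth T0 T0t hW (W0set T0 T0t) = Set.univ := by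
  have hker : ∀ u : T0t.adjoint.domain,
      (u : H) ∈ T0.closure.domain ↔ ∀ v, bform T0 T0t hW u v = 0 := fun u =>
    ⟨hP.bform_eq_zero_of_mem_left hW, hP.mem_closure_domain_of_bform_eq_zero hW⟩
  refine ⟨hker, ?_, ?_⟩
  · ext u
    simp [iorth, W0set, hker]
  · exact Set.eq_univ_of_forall fun u v hv => hP.bform_eq_zero_of_mem_right hW u hv
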